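/- arXiv:2605.02941 — 5 statements merged into one kernel-verified Lean document; each statement's English description precedes it below -/
import Mathlib

section
/- Let h₁, h₂, j₁, j₂ ∈ ℂ and set p₁ := h₁ − j₁/2, p₂ := h₂ − j₂/2. Let f be a continuously differentiable complex-valued function on the domain D = {(w₁, w₂) ∈ ℝ² : w₁ > w₂} satisfying, at every point of D: (i) ∂₁f + ∂₂f = 0; (ii) w₁∂₁f + w₂∂₂f + (p₁ + p₂)f = 0; (iii) w₁²∂₁f + w₂²∂₂f + (2p₁w₁ + 2p₂w₂)f = 0. Then there exists C ∈ ℂ such that f(w₁, w₂) = C·(w₁ − w₂)^{−(p₁+p₂)} on D (principal complex power of the positive real w₁ − w₂), and moreover if p₁ ≠ p₂ then C = 0, i.e. f vanishes identically. -/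
/-! By (i), identity (ii) reads `(w₁ - w₂) ∂₁f = -(p₁ + p₂) f`, which says exactly that
`f · (w₁ - w₂) ^ (p₁ + p₂)` has zero derivative; the domain is convex, so this product is a
constant `C`. Subtracting `(w₁ + w₂)·(ii)` from (iii) and using (i) leaves
`(p₁ - p₂)(w₁ - w₂) f = 0`, so `f` (hence `C`) vanishes when `p₁ ≠ p₂`. -/

open Complex

theorem mul_eq_zero_of_ward_identities {R : Type*} [CommRing R] {a b F w₁ w₂ p₁ p₂ : R}
    (h₁ : a + b = 0) (h₂ : w₁ * a + w₂ * b + (p₁ + p₂) * F = 0)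
    (h₃ : w₁ ^ 2 * a + w₂ ^ 2 * b + (2 * p₁ * w₁ + 2 * p₂ * w₂) * F = 0) :
    (p₁ - p₂) * (w₁ - w₂) * F = 0 := by
  linear_combination h₃ - (w₁ + w₂) * h₂ + w₁ * w₂ * h₁

theorem hasDerivAt_ofReal_cpow_const_of_pos {t : ℝ} (ht : 0 < t) (s : ℂ) :
    HasDerivAt (fun x : ℝ => (x : ℂ) ^ s) (s * (t : ℂ) ^ (s - 1)) t :=
  (hasStrictDerivAt_cpow_const (ofReal_mem_slitPlane.2 ht)).hasDerivAt.comp_ofReal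

theorem hasFDerivAt_mul_sub_cpow_eq_zero {f : ℝ × ℝ → ℂ} {f' : ℝ × ℝ →L[ℝ] ℂ} {p : ℝ × ℝ}
    {s : ℂ} (hf : HasFDerivAt f f' p) (hp : p.2 < p.1) (h₁ : f' (1, 0) + f' (0, 1) = 0)
    (h₂ : (p.1 : ℂ) * f' (1, 0) + (p.2 : ℂ) * f' (0, 1) + s * f p = 0) :
    HasFDerivAt (fun q => f q * ((q.1 - q.2 : ℝ) : ℂ) ^ s) (0 : ℝ × ℝ →L[ℝ] ℂ) p := by
  have hw : 0 < p.1 - p.2 := sub_pos.2 hp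
  have hwC : (p.1 : ℂ) - p.2 ≠ 0 := by exact_mod_cast hw.ne'
  have hu : HasFDerivAt (fun q : ℝ × ℝ => q.1 - q.2)
      (ContinuousLinearMap.fst ℝ ℝ ℝ - ContinuousLinearMap.snd ℝ ℝ ℝ) p :=
    hasFDerivAt_fst.fun_sub hasFDerivAt_snd
  have hweight := (hasDerivAt_ofReal_cpow_const_of_pos hw s).hasFDerivAt.comp p hu
  refine (hf.mul hweight).congr_fderiv ?_
  have h₂' : ((p.1 : ℂ) - p.2) * f' (1, 0) = -s * f p := by
    linear_combination h₂ - (p.2 : ℂ) * h₁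
  have h₁' : f' (0, 1) = -f' (1, 0) := by linear_combination h₁
  ext <;>
  simp only [ofReal_sub, cpow_sub _ _ hwC, cpow_one, h₁', Function.comp_apply, add_apply,
    smul_apply, sub_apply, zero_apply, smul_eq_mul, mul_neg, ContinuousLinearMap.comp_sub,
    ContinuousLinearMap.add_comp, ContinuousLinearMap.smul_comp, ContinuousLinearMap.sub_comp,
    ContinuousLinearMap.zero_comp, ContinuousLinearMap.comp_apply, ContinuousLinearMap.inl_apply,
    ContinuousLinearMap.inr_apply, ContinuousLinearMap.coe_fst', ContinuousLinearMap.coe_snd',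
    ContinuousLinearMap.toSpanSingleton_apply, one_smul, zero_smul, sub_zero, zero_sub] <;>
  field_simp
  · linear_combination ((p.1 : ℂ) - p.2) ^ s * h₂'
  · linear_combination -((p.1 : ℂ) - p.2) ^ s * h₂'

/-- Solving the Ward identities for a 2-point function of bosonic ghost
primaries with charges `j₁, j₂` and weights `h₁, h₂`: any `C¹` solution on
`{w₁ > w₂}` is `C (w₁ - w₂) ^ (-(p₁ + p₂))` with `pᵢ = hᵢ - jᵢ/2`, and `C = 0`
unless `p₁ = p₂`. -/
theorem ghost_two_point_ward (h₁ h₂ j₁ j₂ : ℂ) (f : ℝ × ℝ → ℂ)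
    (hf : ContDiffOn ℝ 1 f {p : ℝ × ℝ | p.2 < p.1})
    (hW1 : ∀ p ∈ {p : ℝ × ℝ | p.2 < p.1},
      fderiv ℝ f p (1, 0) + fderiv ℝ f p (0, 1) = 0)
    (hW2 : ∀ p ∈ {p : ℝ × ℝ | p.2 < p.1},
      (p.1 : ℂ) * fderiv ℝ f p (1, 0) + (p.2 : ℂ) * fderiv ℝ f p (0, 1)
        + ((h₁ - j₁ / 2) + (h₂ - j₂ / 2)) * f p = 0)
    (hW3 : ∀ p ∈ {p : ℝ × ℝ | p.2 < p.1},
      (p.1 : ℂ) ^ 2 * fderiv ℝ f p (1, 0) + (p.2 : ℂ) ^ 2 * fderiv ℝ f p (0, 1)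
        + (2 * (h₁ - j₁ / 2) * (p.1 : ℂ) + 2 * (h₂ - j₂ / 2) * (p.2 : ℂ)) * f p = 0) :
    ∃ C : ℂ,
      (∀ p ∈ {p : ℝ × ℝ | p.2 < p.1},
        f p = C * ((p.1 - p.2 : ℝ) : ℂ) ^ (-((h₁ - j₁ / 2) + (h₂ - j₂ / 2))))
      ∧ ((h₁ - j₁ / 2) ≠ (h₂ - j₂ / 2) → C = 0) := by
  set s := (h₁ - j₁ / 2) + (h₂ - j₂ / 2)
  set D := {p : ℝ × ℝ | p.2 < p.1}
  have hD : IsOpen D := isOpen_lt continuous_snd continuous_fst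
  have hDconv : Convex ℝ D := by
    simpa [D, sub_pos] using convex_halfSpace_gt
      (LinearMap.fst ℝ ℝ ℝ - LinearMap.snd ℝ ℝ ℝ).isLinear (0 : ℝ)
  have hg : ∀ p ∈ D, HasFDerivAt (fun q => f q * ((q.1 - q.2 : ℝ) : ℂ) ^ s) 0 p := fun p hp =>
    hasFDerivAt_mul_sub_cpow_eq_zero
      ((hf.differentiableOn one_ne_zero p hp).differentiableAt (hD.mem_nhds hp)).hasFDerivAt
      hp (hW1 p hp) (hW2 p hp)
  obtain ⟨C, hC⟩ := hD.exists_is_const_of_fderiv_eq_zero hDconv.isPreconnected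
    (fun p hp => (hg p hp).differentiableAt.differentiableWithinAt) (fun p hp => (hg p hp).fderiv)
  refine ⟨C, fun p hp => ?_, fun hne => ?_⟩
  · have hw : ((p.1 - p.2 : ℝ) : ℂ) ≠ 0 := ofReal_ne_zero.2 (sub_pos.2 hp).ne'
    rw [← hC p hp, cpow_neg, mul_inv_cancel_right₀ (cpow_ne_zero_iff.2 (Or.inl hw))]
  · have h10 : ((1 : ℝ), (0 : ℝ)) ∈ D := by simp [D]
    have hvanish := mul_eq_zero_of_ward_identities (hW1 _ h10) (hW2 _ h10) (hW3 _ h10)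
    have hf10 : f (1, 0) = 0 := by simpa [sub_eq_zero, hne] using hvanish
    simp [← hC _ h10, hf10]
end

section
/- Let h₁, h₂, h₃, j₁, j₂, j₃ ∈ ℂ and set p_i := h_i − j_i/2 for i = 1, 2, 3. Let f be a continuously differentiable complex-valued function on D = {(w₁, w₂, w₃) ∈ ℝ³ : w₁ > w₂ > w₃} satisfying at every point of D: (i) ∑_{i=1}^{3} ∂_i f = 0; (ii) ∑_{i=1}^{3} (w_i ∂_i f + p_i f) = 0; (iii) ∑_{i=1}^{3} (w_i² ∂_i f + 2 p_i w_i f) = 0. Then there exists C ∈ ℂ such that f(w₁, w₂, w₃) = C·(w₁−w₂)^{p₃−p₁−p₂}·(w₁−w₃)^{p₂−p₁−p₃}·(w₂−w₃)^{p₁−p₂−p₃} on D. -/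
/-!
The Ward identities form a Vandermonde system (coefficients `1`, `wᵢ`, `wᵢ²`) in the three partial
derivatives of `f`, so at each point of `{w₀ > w₁ > w₂}` they force `Df = f • ℓ` for an explicit
covector `ℓ = wardLogDeriv`. The product `Φ` of the three powers has the same logarithmic
derivative `ℓ`, hence `f / Φ` has vanishing derivative on this convex open set and is constant.
-/

/-- The partial derivative in the `i`-th direction of a function of three
real variables. -/
noncomputable def pderiv3 (F : (Fin 3 → ℝ) → ℂ) (i : Fin 3) (w : Fin 3 → ℝ) : ℂ :=
  fderiv ℝ F w (Pi.single i 1)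

open Complex ContinuousLinearMap

section LogDeriv

variable {E : Type*} [NormedAddCommGroup E] [NormedSpace ℝ E] {u v : E → ℂ}
  {L M : E →L[ℝ] ℂ} {x : E}

theorem HasFDerivAt.mul_of_logDeriv (hu : HasFDerivAt u (u x • L) x)
    (hv : HasFDerivAt v (v x • M) x) :
    HasFDerivAt (fun y => u y * v y) ((u x * v x) • (L + M)) x := by
  refine (hu.mul hv).congr_fderiv ?_
  ext y
  simp only [smul_apply, add_apply, smul_eq_mul]
  ring

theorem HasFDerivAt.inv_of_logDeriv (hu : HasFDerivAt u (u x • L) x) (hx : u x ≠ 0) :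
    HasFDerivAt (fun y => (u y)⁻¹) ((u x)⁻¹ • -L) x := by
  refine ((hasDerivAt_inv hx).comp_hasFDerivAt x hu).congr_fderiv ?_
  ext y
  simp only [smul_apply, neg_apply, smul_eq_mul]
  field_simp

theorem HasFDerivAt.ofReal_cpow_const {g : E → ℝ} {g' : E →L[ℝ] ℝ} (hg : HasFDerivAt g g' x)
    (hx : 0 < g x) (s : ℂ) :
    HasFDerivAt (fun y => (g y : ℂ) ^ s) ((g x : ℂ) ^ s • (s / g x) • ofRealCLM.comp g') x := by
  have hslit : (g x : ℂ) ∈ slitPlane := ofReal_mem_slitPlane.2 hx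
  have hne : (g x : ℂ) ≠ 0 := slitPlane_ne_zero hslit
  refine ((Complex.hasStrictDerivAt_cpow_const (c := s) hslit).hasDerivAt.comp_hasFDerivAt x
    (ofRealCLM.hasFDerivAt.comp x hg)).congr_fderiv ?_
  rw [smul_smul, cpow_sub _ _ hne, cpow_one]
  congr 1
  ring

theorem IsOpen.exists_eq_const_mul_of_logDeriv {s : Set E} (hs : IsOpen s) (hs' : IsPreconnected s)
    {D : E → E →L[ℝ] ℂ} (hu : ∀ x ∈ s, HasFDerivAt u (u x • D x) x)
    (hv : ∀ x ∈ s, HasFDerivAt v (v x • D x) x) (hv₀ : ∀ x ∈ s, v x ≠ 0) :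
    ∃ C, ∀ x ∈ s, u x = C * v x := by
  have hquot : ∀ x ∈ s, HasFDerivAt (fun y => u y * (v y)⁻¹) 0 x := fun x hx => by
    simpa using (hu x hx).mul_of_logDeriv ((hv x hx).inv_of_logDeriv (hv₀ x hx))
  obtain ⟨C, hC⟩ := hs.exists_is_const_of_fderiv_eq_zero hs'
    (fun x hx => (hquot x hx).differentiableAt.differentiableWithinAt)
    (fun x hx => (hquot x hx).fderiv)
  exact ⟨C, fun x hx => by rw [← hC x hx, inv_mul_cancel_right₀ (hv₀ x hx)]⟩

end LogDeriv

theorem convex_setOf_apply_lt_apply {ι : Type*} (i j : ι) :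
    Convex ℝ {w : ι → ℝ | w i < w j} := by
  simpa only [sub_neg] using convex_halfSpace_lt (f := fun w : ι → ℝ => w i - w j)
    ⟨fun _ _ => by simp only [Pi.add_apply]; ring,
      fun _ _ => by simp only [Pi.smul_apply, smul_eq_mul]; ring⟩ 0

theorem ward_system_solution {p₁ p₂ p₃ W₀ W₁ W₂ d₀ d₁ d₂ c : ℂ}
    (h₀₁ : W₀ - W₁ ≠ 0) (h₀₂ : W₀ - W₂ ≠ 0) (h₁₂ : W₁ - W₂ ≠ 0)
    (e₁ : d₀ + d₁ + d₂ = 0)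
    (e₂ : (W₀ * d₀ + p₁ * c) + (W₁ * d₁ + p₂ * c) + (W₂ * d₂ + p₃ * c) = 0)
    (e₃ : (W₀ ^ 2 * d₀ + 2 * p₁ * W₀ * c) + (W₁ ^ 2 * d₁ + 2 * p₂ * W₁ * c)
      + (W₂ ^ 2 * d₂ + 2 * p₃ * W₂ * c) = 0) :
    d₀ = c * ((p₃ - p₁ - p₂) / (W₀ - W₁) + (p₂ - p₁ - p₃) / (W₀ - W₂)) ∧
    d₁ = c * (-(p₃ - p₁ - p₂) / (W₀ - W₁) + (p₁ - p₂ - p₃) / (W₁ - W₂)) ∧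
    d₂ = c * (-(p₂ - p₁ - p₃) / (W₀ - W₂) - (p₁ - p₂ - p₃) / (W₁ - W₂)) := by
  -- Up to sign, each goal is `e₁, e₂, e₃` weighted by the coefficients of `1, X, X²` in
  -- `(X - Wⱼ)(X - Wₖ)`, which eliminates `dⱼ` and `dₖ`.
  refine ⟨?_, ?_, ?_⟩ <;> field_simp
  · linear_combination W₁ * W₂ * e₁ - (W₁ + W₂) * e₂ + e₃
  · linear_combination (-(W₀ * W₂)) * e₁ + (W₀ + W₂) * e₂ - e₃
  · linear_combination W₀ * W₁ * e₁ - (W₀ + W₁) * e₂ + e₃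

def decreasingTriples : Set (Fin 3 → ℝ) := {w | w 2 < w 1 ∧ w 1 < w 0}

theorem isOpen_decreasingTriples : IsOpen decreasingTriples :=
  (isOpen_lt (continuous_apply 2) (continuous_apply 1)).inter
    (isOpen_lt (continuous_apply 1) (continuous_apply 0))

theorem convex_decreasingTriples : Convex ℝ decreasingTriples :=
  (convex_setOf_apply_lt_apply 2 1).inter (convex_setOf_apply_lt_apply 1 0)

noncomputable section Ward

def coordDiff {ι : Type*} (i j : ι) : (ι → ℝ) →L[ℝ] ℝ :=
  proj (R := ℝ) (φ := fun _ => ℝ) i - proj j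

@[simp]
theorem coordDiff_apply {ι : Type*} (i j : ι) (w : ι → ℝ) : coordDiff i j w = w i - w j := rfl

variable (p₁ p₂ p₃ : ℂ)

def wardSolution (w : Fin 3 → ℝ) : ℂ :=
  ((w 0 - w 1 : ℝ) : ℂ) ^ (p₃ - p₁ - p₂) * ((w 0 - w 2 : ℝ) : ℂ) ^ (p₂ - p₁ - p₃)
    * ((w 1 - w 2 : ℝ) : ℂ) ^ (p₁ - p₂ - p₃)

def wardLogDeriv (w : Fin 3 → ℝ) : (Fin 3 → ℝ) →L[ℝ] ℂ :=
  ((p₃ - p₁ - p₂) / (w 0 - w 1 : ℝ)) • ofRealCLM.comp (coordDiff 0 1)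
    + ((p₂ - p₁ - p₃) / (w 0 - w 2 : ℝ)) • ofRealCLM.comp (coordDiff 0 2)
    + ((p₁ - p₂ - p₃) / (w 1 - w 2 : ℝ)) • ofRealCLM.comp (coordDiff 1 2)

variable {p₁ p₂ p₃}

theorem wardLogDeriv_apply (w v : Fin 3 → ℝ) :
    wardLogDeriv p₁ p₂ p₃ w v = (p₃ - p₁ - p₂) / (w 0 - w 1 : ℝ) * (v 0 - v 1 : ℝ)
      + (p₂ - p₁ - p₃) / (w 0 - w 2 : ℝ) * (v 0 - v 2 : ℝ)
      + (p₁ - p₂ - p₃) / (w 1 - w 2 : ℝ) * (v 1 - v 2 : ℝ) := by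
  simp [wardLogDeriv]

theorem hasFDerivAt_wardSolution {w : Fin 3 → ℝ} (hw : w ∈ decreasingTriples) :
    HasFDerivAt (wardSolution p₁ p₂ p₃) (wardSolution p₁ p₂ p₃ w • wardLogDeriv p₁ p₂ p₃ w) w := by
  obtain ⟨h₂₁, h₁₀⟩ := hw
  have factor : ∀ (i j : Fin 3) (s : ℂ), w j < w i →
      HasFDerivAt (fun y : Fin 3 → ℝ => ((y i - y j : ℝ) : ℂ) ^ s)
        (((w i - w j : ℝ) : ℂ) ^ s • (s / (w i - w j : ℝ)) • ofRealCLM.comp (coordDiff i j)) w :=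
    fun i j s hij => (coordDiff i j).hasFDerivAt.ofReal_cpow_const (x := w) (sub_pos.2 hij) s
  exact ((factor 0 1 _ h₁₀).mul_of_logDeriv (factor 0 2 _ (h₂₁.trans h₁₀))).mul_of_logDeriv
    (factor 1 2 _ h₂₁)

theorem wardSolution_ne_zero {w : Fin 3 → ℝ} (hw : w ∈ decreasingTriples) :
    wardSolution p₁ p₂ p₃ w ≠ 0 := by
  obtain ⟨h₂₁, h₁₀⟩ := hw
  have factor : ∀ {a b : ℝ} (s : ℂ), b < a → ((a - b : ℝ) : ℂ) ^ s ≠ 0 := fun s hab => by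
    simp [cpow_eq_zero_iff, sub_eq_zero, hab.ne']
  exact mul_ne_zero (mul_ne_zero (factor _ h₁₀) (factor _ (h₂₁.trans h₁₀))) (factor _ h₂₁)

theorem fderiv_eq_smul_wardLogDeriv {f : (Fin 3 → ℝ) → ℂ} {w : Fin 3 → ℝ}
    (hw : w ∈ decreasingTriples)
    (e₁ : pderiv3 f 0 w + pderiv3 f 1 w + pderiv3 f 2 w = 0)
    (e₂ : ((w 0 : ℂ) * pderiv3 f 0 w + p₁ * f w) + ((w 1 : ℂ) * pderiv3 f 1 w + p₂ * f w)
      + ((w 2 : ℂ) * pderiv3 f 2 w + p₃ * f w) = 0)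
    (e₃ : ((w 0 : ℂ) ^ 2 * pderiv3 f 0 w + 2 * p₁ * (w 0 : ℂ) * f w)
      + ((w 1 : ℂ) ^ 2 * pderiv3 f 1 w + 2 * p₂ * (w 1 : ℂ) * f w)
      + ((w 2 : ℂ) ^ 2 * pderiv3 f 2 w + 2 * p₃ * (w 2 : ℂ) * f w) = 0) :
    fderiv ℝ f w = f w • wardLogDeriv p₁ p₂ p₃ w := by
  obtain ⟨h₂₁, h₁₀⟩ := hw
  have hne : ∀ {a b : ℝ}, b < a → (a : ℂ) - b ≠ 0 := fun hab => by
    exact_mod_cast (sub_pos.2 hab).ne'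
  obtain ⟨d₀, d₁, d₂⟩ := ward_system_solution (hne h₁₀) (hne (h₂₁.trans h₁₀)) (hne h₂₁) e₁ e₂ e₃
  refine ContinuousLinearMap.coe_injective ((Pi.basisFun ℝ (Fin 3)).ext fun k => ?_)
  unfold pderiv3 at d₀ d₁ d₂
  fin_cases k <;>
    simp only [Fin.reduceFinMk, Pi.basisFun_apply, coe_coe, toLinearMap_smul, LinearMap.smul_apply,
      smul_eq_mul, wardLogDeriv_apply, Pi.single_apply, Fin.reduceEq, if_true, if_false, ofReal_sub,
      ofReal_zero, ofReal_one]
  · linear_combination d₀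
  · linear_combination d₁
  · linear_combination d₂

end Ward

/-- Solving the Ward identities for a 3-point function of bosonic ghost
primaries with charges `jᵢ` and weights `hᵢ`: any `C¹` solution on
`{w₁ > w₂ > w₃}` is a constant multiple of
`(w₁-w₂)^(p₃-p₁-p₂) (w₁-w₃)^(p₂-p₁-p₃) (w₂-w₃)^(p₁-p₂-p₃)`
with `pᵢ = hᵢ - jᵢ/2`. -/
theorem ghost_three_point_ward (h₁ h₂ h₃ j₁ j₂ j₃ : ℂ) (f : (Fin 3 → ℝ) → ℂ)
    (hf : ContDiffOn ℝ 1 f {w : Fin 3 → ℝ | w 2 < w 1 ∧ w 1 < w 0})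
    (hW1 : ∀ w ∈ {w : Fin 3 → ℝ | w 2 < w 1 ∧ w 1 < w 0},
      pderiv3 f 0 w + pderiv3 f 1 w + pderiv3 f 2 w = 0)
    (hW2 : ∀ w ∈ {w : Fin 3 → ℝ | w 2 < w 1 ∧ w 1 < w 0},
      ((w 0 : ℂ) * pderiv3 f 0 w + (h₁ - j₁ / 2) * f w)
        + ((w 1 : ℂ) * pderiv3 f 1 w + (h₂ - j₂ / 2) * f w)
        + ((w 2 : ℂ) * pderiv3 f 2 w + (h₃ - j₃ / 2) * f w) = 0)
    (hW3 : ∀ w ∈ {w : Fin 3 → ℝ | w 2 < w 1 ∧ w 1 < w 0},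
      ((w 0 : ℂ) ^ 2 * pderiv3 f 0 w + 2 * (h₁ - j₁ / 2) * (w 0 : ℂ) * f w)
        + ((w 1 : ℂ) ^ 2 * pderiv3 f 1 w + 2 * (h₂ - j₂ / 2) * (w 1 : ℂ) * f w)
        + ((w 2 : ℂ) ^ 2 * pderiv3 f 2 w + 2 * (h₃ - j₃ / 2) * (w 2 : ℂ) * f w) = 0) :
    ∃ C : ℂ, ∀ w ∈ {w : Fin 3 → ℝ | w 2 < w 1 ∧ w 1 < w 0},
      f w = C * ((w 0 - w 1 : ℝ) : ℂ) ^ ((h₃ - j₃ / 2) - (h₁ - j₁ / 2) - (h₂ - j₂ / 2))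
        * ((w 0 - w 2 : ℝ) : ℂ) ^ ((h₂ - j₂ / 2) - (h₁ - j₁ / 2) - (h₃ - j₃ / 2))
        * ((w 1 - w 2 : ℝ) : ℂ) ^ ((h₁ - j₁ / 2) - (h₂ - j₂ / 2) - (h₃ - j₃ / 2)) := by
  have hderiv : ∀ w ∈ decreasingTriples,
      HasFDerivAt f (f w • wardLogDeriv (h₁ - j₁ / 2) (h₂ - j₂ / 2) (h₃ - j₃ / 2) w) w :=
    fun w hw => by
      rw [← fderiv_eq_smul_wardLogDeriv hw (hW1 w hw) (hW2 w hw) (hW3 w hw)]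
      exact ((hf.differentiableOn one_ne_zero).differentiableAt
        (isOpen_decreasingTriples.mem_nhds hw)).hasFDerivAt
  obtain ⟨C, hC⟩ := isOpen_decreasingTriples.exists_eq_const_mul_of_logDeriv
    convex_decreasingTriples.isPreconnected hderiv (fun w hw => hasFDerivAt_wardSolution hw)
    (fun w hw => wardSolution_ne_zero hw)
  exact ⟨C, fun w hw => by rw [hC w hw, wardSolution]; ring⟩
end

section
/- Let h₁,…,h₄, j₁,…,j₄ ∈ ℂ, set p_i := h_i − j_i/2 and p̄ := (p₁+p₂+p₃+p₄)/3. Let f be a continuously differentiable complex-valued function on D = {(w₁,…,w₄) ∈ ℝ⁴ : w₁ > w₂ > w₃ > w₄} satisfying at every point of D: (i) ∑_{i=1}^{4} ∂_i f = 0; (ii) ∑_{i=1}^{4} (w_i ∂_i f + p_i f) = 0; (iii) ∑_{i=1}^{4} (w_i² ∂_i f + 2 p_i w_i f) = 0. Then there exists a function H : (0,1) → ℂ such that for all (w₁,…,w₄) ∈ D, f(w₁,…,w₄) = H(η) · ∏_{1≤a<b≤4} (w_a − w_b)^{p̄ − p_a − p_b}, where η := (w₁−w₂)(w₃−w₄)/((w₁−w₃)(w₂−w₄))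 (which lies in (0,1) on D). -/
/-- The partial derivative in the `i`-th direction of a function of four
real variables. -/
noncomputable def pderiv4 (F : (Fin 4 → ℝ) → ℂ) (i : Fin 4) (w : Fin 4 → ℝ) : ℂ :=
  fderiv ℝ F w (Pi.single i 1)

/-- The shifted weights `pᵢ = hᵢ - jᵢ/2`. -/
noncomputable def shiftedWt (h j : Fin 4 → ℂ) (i : Fin 4) : ℂ := h i - j i / 2

/-- The average `p̄ = (p₁ + p₂ + p₃ + p₄)/3` of the shifted weights. -/
noncomputable def shiftedWtAvg (h j : Fin 4 → ℂ) : ℂ := (∑ i, shiftedWt h j i) / 3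

/-- The Ward-identity prefactor `∏_{a<b} (w_a - w_b)^(p̄ - p_a - p_b)`. -/
noncomputable def wardPrefactor (h j : Fin 4 → ℂ) (w : Fin 4 → ℝ) : ℂ :=
  ∏ a : Fin 4, ∏ b : Fin 4,
    if a < b then
      ((w a - w b : ℝ) : ℂ) ^ (shiftedWtAvg h j - shiftedWt h j a - shiftedWt h j b)
    else 1

/-- The cross-ratio `η = (w₁-w₂)(w₃-w₄)/((w₁-w₃)(w₂-w₄))`. -/
noncomputable def crossRatio (w : Fin 4 → ℝ) : ℝ :=
  ((w 0 - w 1) * (w 2 - w 3)) / ((w 0 - w 2) * (w 1 - w 3))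

/-!
Divide `f` by the prefactor `P`. Since `P` itself solves the three Ward identities, the quotient
`g = f / P` is annihilated by the three generators `∑ ∂ᵢ`, `∑ wᵢ ∂ᵢ`, `∑ wᵢ² ∂ᵢ`, i.e. by every
infinitesimal Möbius transformation `x ↦ c₀ + c₁ x + c₂ x²`. Hence `g` is constant along any path
of ordered configurations whose velocity is of this form, in particular along translations,
dilations and special conformal flows `x ↦ x / (1 - u x)`. Composing one of each moves any ordered
configuration, keeping it ordered, to `(1, (1 - η)/(1 + η), 0, -1)`, where `η` is its cross-ratio;
so `g(w) = H(η)` with `H(η)` the value of `g` at that point.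
-/

open Set

def orderedConfigs : Set (Fin 4 → ℝ) := {w | StrictAnti w}

lemma orderedConfigs_eq :
    {w : Fin 4 → ℝ | w 3 < w 2 ∧ w 2 < w 1 ∧ w 1 < w 0} = orderedConfigs := by
  ext w
  simp only [orderedConfigs, mem_ofPred_eq, Fin.strictAnti_iff_succ_lt, Fin.forall_fin_succ,
    IsEmpty.forall_iff]
  constructor
  · rintro ⟨h32, h21, h10⟩
    exact ⟨h10, h21, h32, trivial⟩
  · rintro ⟨h10, h21, h32, -⟩
    exact ⟨h32, h21, h10⟩

lemma isOpen_orderedConfigs : IsOpen orderedConfigs :=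
  orderedConfigs_eq ▸ (isOpen_lt (continuous_apply 3) (continuous_apply 2)).inter
    ((isOpen_lt (continuous_apply 2) (continuous_apply 1)).inter
      (isOpen_lt (continuous_apply 1) (continuous_apply 0)))

structure IsWardSolution (p : Fin 4 → ℂ) (f : (Fin 4 → ℝ) → ℂ) : Prop where
  differentiableOn : DifferentiableOn ℝ f orderedConfigs
  translation_ward : ∀ w ∈ orderedConfigs, ∑ i, pderiv4 f i w = 0
  dilation_ward : ∀ w ∈ orderedConfigs, ∑ i, ((w i : ℂ) * pderiv4 f i w + p i * f w) = 0
  specialConformal_ward : ∀ w ∈ orderedConfigs,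
    ∑ i, ((w i : ℂ) ^ 2 * pderiv4 f i w + 2 * p i * (w i : ℂ) * f w) = 0

/-- The infinitesimal Möbius transformations: the `sl₂(ℝ)` vector fields `c₀ + c₁ x + c₂ x²`,
evaluated at the four points. -/
def moebiusField (c₀ c₁ c₂ : ℝ) (w : Fin 4 → ℝ) : Fin 4 → ℝ :=
  fun i => c₀ + c₁ * w i + c₂ * w i ^ 2

def wardWeight (p : Fin 4 → ℂ) (c₁ c₂ : ℝ) (w : Fin 4 → ℝ) : ℂ :=
  c₁ * ∑ i, p i + 2 * c₂ * ∑ i, p i * w i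

lemma fderiv_apply_eq_sum_pderiv4 (F : (Fin 4 → ℝ) → ℂ) (w v : Fin 4 → ℝ) :
    fderiv ℝ F w v = ∑ i, (v i : ℂ) * pderiv4 F i w := by
  conv_lhs => rw [pi_eq_sum_univ' v, map_sum]
  simp only [map_smul, pderiv4, Complex.real_smul]

lemma IsWardSolution.fderiv_apply_moebiusField {p : Fin 4 → ℂ} {f : (Fin 4 → ℝ) → ℂ}
    (hf : IsWardSolution p f) {w : Fin 4 → ℝ} (hw : w ∈ orderedConfigs) (c₀ c₁ c₂ : ℝ) :
    fderiv ℝ f w (moebiusField c₀ c₁ c₂ w) = -wardWeight p c₁ c₂ w * f w := by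
  have h₀ := hf.translation_ward w hw
  have h₁ := hf.dilation_ward w hw
  have h₂ := hf.specialConformal_ward w hw
  rw [fderiv_apply_eq_sum_pderiv4]
  simp only [moebiusField, wardWeight, Fin.sum_univ_four] at h₀ h₁ h₂ ⊢
  push_cast
  linear_combination (c₀ : ℂ) * h₀ + (c₁ : ℂ) * h₁ + (c₂ : ℂ) * h₂

noncomputable def logPrefactor (p : Fin 4 → ℂ) (w : Fin 4 → ℝ) : ℂ :=
  ∑ a : Fin 4, ∑ b : Fin 4,
    if a < b then (Real.log (w a - w b) : ℂ) * ((∑ i, p i) / 3 - p a - p b) else 0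

lemma wardPrefactor_eq_exp_logPrefactor (h j : Fin 4 → ℂ) {w : Fin 4 → ℝ}
    (hw : w ∈ orderedConfigs) :
    wardPrefactor h j w = Complex.exp (logPrefactor (shiftedWt h j) w) := by
  simp only [wardPrefactor, logPrefactor, shiftedWtAvg, Complex.exp_sum]
  refine Finset.prod_congr rfl fun a _ => Finset.prod_congr rfl fun b _ => ?_
  split_ifs with hab
  · have hpos : 0 < w a - w b := sub_pos.2 (hw hab)
    rw [Complex.cpow_def_of_ne_zero (by exact_mod_cast hpos.ne'), Complex.ofReal_log hpos.le]
  · exact Complex.exp_zero.symm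

lemma sum_pairs_fin4 {M : Type*} [AddCommMonoid M] (T : Fin 4 → Fin 4 → M) :
    (∑ a : Fin 4, ∑ b : Fin 4, if a < b then T a b else 0)
      = T 0 1 + T 0 2 + T 0 3 + T 1 2 + T 1 3 + T 2 3 := by
  simp only [Fin.sum_univ_four, Fin.isValue, not_lt_zero, ↓reduceIte, Fin.lt_one_iff,
    Nat.reduceAdd, zero_add, Fin.reduceLT, one_ne_zero, Fin.reduceEq, lt_self_iff_false, add_zero]
  abel

/-- This identity is what fixes the exponents `p̄ - p_a - p_b`: it says that the prefactor
alone solves the Ward identities. -/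
lemma sum_pairs_slope_moebiusField (p : Fin 4 → ℂ) {w : Fin 4 → ℝ}
    (hw : w ∈ orderedConfigs) (c₀ c₁ c₂ : ℝ) :
    (∑ a : Fin 4, ∑ b : Fin 4, if a < b then
        (((moebiusField c₀ c₁ c₂ w a - moebiusField c₀ c₁ c₂ w b) / (w a - w b) : ℝ) : ℂ)
          * ((∑ i, p i) / 3 - p a - p b) else 0)
      = -wardWeight p c₁ c₂ w := by
  have slope : ∀ a b : Fin 4, a < b →
      (moebiusField c₀ c₁ c₂ w a - moebiusField c₀ c₁ c₂ w b) / (w a - w b)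
        = c₁ + c₂ * (w a + w b) := by
    intro a b hab
    rw [div_eq_iff (sub_pos.2 (hw hab)).ne']
    simp only [moebiusField]
    ring
  rw [sum_pairs_fin4, slope 0 1 (by decide), slope 0 2 (by decide), slope 0 3 (by decide),
    slope 1 2 (by decide), slope 1 3 (by decide), slope 2 3 (by decide)]
  simp only [wardWeight, Fin.sum_univ_four]
  push_cast
  ring

lemma hasDerivAt_logPrefactor_comp (p : Fin 4 → ℂ) {γ : ℝ → Fin 4 → ℝ} {v : Fin 4 → ℝ}
    {s : ℝ} (hs : γ s ∈ orderedConfigs) (hγ : HasDerivAt γ v s) :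
    HasDerivAt (fun u => logPrefactor p (γ u))
      (∑ a : Fin 4, ∑ b : Fin 4, if a < b then
        (((v a - v b) / (γ s a - γ s b) : ℝ) : ℂ) * ((∑ i, p i) / 3 - p a - p b) else 0) s := by
  refine HasDerivAt.fun_sum fun a _ => HasDerivAt.fun_sum fun b _ => ?_
  split_ifs with hab
  · have hdiff := (hasDerivAt_pi.1 hγ a).sub (hasDerivAt_pi.1 hγ b)
    exact ((hdiff.log (sub_pos.2 (hs hab)).ne').ofReal_comp).mul_const _
  · exact hasDerivAt_const _ _

/-- `f` divided by the Ward prefactor; the Ward identities say exactly that it is Möbius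
invariant. -/
noncomputable def reducedAmp (p : Fin 4 → ℂ) (f : (Fin 4 → ℝ) → ℂ) (w : Fin 4 → ℝ) : ℂ :=
  f w * Complex.exp (-logPrefactor p w)

lemma IsWardSolution.hasDerivAt_reducedAmp_comp {p : Fin 4 → ℂ} {f : (Fin 4 → ℝ) → ℂ}
    (hf : IsWardSolution p f) {γ : ℝ → Fin 4 → ℝ} {s c₀ c₁ c₂ : ℝ}
    (hs : γ s ∈ orderedConfigs) (hγ : HasDerivAt γ (moebiusField c₀ c₁ c₂ (γ s)) s) :
    HasDerivAt (fun u => reducedAmp p f (γ u)) 0 s := by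
  have hfγ := ((hf.differentiableOn.differentiableAt
    (isOpen_orderedConfigs.mem_nhds hs)).hasFDerivAt).comp_hasDerivAt s hγ
  have hexp := (hasDerivAt_logPrefactor_comp p hs hγ).neg.cexp
  refine (hfγ.mul hexp).congr_deriv ?_
  rw [hf.fderiv_apply_moebiusField hs, sum_pairs_slope_moebiusField p hs]
  simp only [Function.comp_apply, Pi.neg_apply]
  ring

lemma IsWardSolution.reducedAmp_eq_of_path {p : Fin 4 → ℂ} {f : (Fin 4 → ℝ) → ℂ}
    (hf : IsWardSolution p f) {γ : ℝ → Fin 4 → ℝ} {a b : ℝ}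
    (hmem : ∀ s ∈ uIcc a b, γ s ∈ orderedConfigs)
    (hγ : ∀ s ∈ uIcc a b, ∃ c₀ c₁ c₂ : ℝ, HasDerivAt γ (moebiusField c₀ c₁ c₂ (γ s)) s) :
    reducedAmp p f (γ a) = reducedAmp p f (γ b) := by
  have hderiv : ∀ s ∈ uIcc a b,
      HasDerivWithinAt (fun u => reducedAmp p f (γ u)) 0 (uIcc a b) s := by
    intro s hs
    obtain ⟨c₀, c₁, c₂, hγs⟩ := hγ s hs
    exact (hf.hasDerivAt_reducedAmp_comp (hmem s hs) hγs).hasDerivWithinAt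
  have := Convex.norm_image_sub_le_of_norm_hasDerivWithin_le hderiv (fun _ _ => norm_zero.le)
    (convex_uIcc a b) left_mem_uIcc right_mem_uIcc
  rw [zero_mul, norm_le_zero_iff, sub_eq_zero] at this
  exact this.symm

lemma IsWardSolution.reducedAmp_add_const {p : Fin 4 → ℂ} {f : (Fin 4 → ℝ) → ℂ}
    (hf : IsWardSolution p f) {w : Fin 4 → ℝ} (hw : w ∈ orderedConfigs) (t : ℝ) :
    reducedAmp p f (fun i => w i + t) = reducedAmp p f w := by
  have := hf.reducedAmp_eq_of_path (γ := fun s i => w i + s * t) (a := 0) (b := 1)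
    (fun s _ => hw.add_const (s * t))
    (fun s _ => ⟨t, 0, 0, hasDerivAt_pi.2 fun i => by
      simpa [moebiusField] using ((hasDerivAt_id s).mul_const t).const_add (w i)⟩)
  simpa using this.symm

lemma IsWardSolution.reducedAmp_const_mul {p : Fin 4 → ℂ} {f : (Fin 4 → ℝ) → ℂ}
    (hf : IsWardSolution p f) {w : Fin 4 → ℝ} (hw : w ∈ orderedConfigs) {k : ℝ}
    (hk : 0 < k) :
    reducedAmp p f (fun i => k * w i) = reducedAmp p f w := by
  have := hf.reducedAmp_eq_of_path (γ := fun s i => Real.exp (s * Real.log k) * w i)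
    (a := 0) (b := 1) (fun s _ => hw.const_mul (Real.exp_pos _))
    (fun s _ => ⟨0, Real.log k, 0, hasDerivAt_pi.2 fun i => by
      simpa [moebiusField, mul_assoc, mul_comm, mul_left_comm] using
        (((hasDerivAt_id s).mul_const (Real.log k)).exp).mul_const (w i)⟩)
  simpa [Real.exp_log hk] using this.symm

/-- The special conformal transformation `x ↦ x / (1 - u x)`, the flow of `x²`. -/
noncomputable def specialConformal (u : ℝ) (w : Fin 4 → ℝ) : Fin 4 → ℝ :=
  fun i => w i / (1 - u * w i)

lemma specialConformal_mem {u : ℝ} {w : Fin 4 → ℝ} (hw : w ∈ orderedConfigs)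
    (hu : ∀ i, 0 < 1 - u * w i) : specialConformal u w ∈ orderedConfigs := by
  intro a b hab
  have hlt := hw hab
  simp only [specialConformal]
  rw [div_lt_div_iff₀ (hu b) (hu a)]
  nlinarith

@[simp]
lemma specialConformal_zero (w : Fin 4 → ℝ) : specialConformal 0 w = w := by
  funext i
  simp [specialConformal]

lemma one_sub_mul_pos_of_mem_uIcc {u x s : ℝ} (hu : 0 < 1 - u * x) (hs : s ∈ uIcc 0 u) :
    0 < 1 - s * x := by
  rcases mem_uIcc.1 hs with ⟨h0, h1⟩ | ⟨h0, h1⟩ <;> rcases le_total 0 x with hx | hx <;>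
    nlinarith

lemma IsWardSolution.reducedAmp_specialConformal {p : Fin 4 → ℂ} {f : (Fin 4 → ℝ) → ℂ}
    (hf : IsWardSolution p f) {w : Fin 4 → ℝ} (hw : w ∈ orderedConfigs) {u : ℝ}
    (hu : ∀ i, 0 < 1 - u * w i) :
    reducedAmp p f (specialConformal u w) = reducedAmp p f w := by
  have hpos : ∀ s ∈ uIcc 0 u, ∀ i, 0 < 1 - s * w i :=
    fun s hs i => one_sub_mul_pos_of_mem_uIcc (hu i) hs
  have hflow : ∀ s ∈ uIcc 0 u,
      HasDerivAt (fun s => specialConformal s w)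
        (moebiusField 0 0 1 (specialConformal s w)) s := by
    intro s hs
    refine hasDerivAt_pi.2 fun i => ?_
    have hne := (hpos s hs i).ne'
    refine ((hasDerivAt_const s (w i)).div
      (((hasDerivAt_id s).mul_const (w i)).const_sub 1) hne).congr_deriv ?_
    simp only [moebiusField, specialConformal, id]
    field_simp
    ring
  have := hf.reducedAmp_eq_of_path (fun s hs => specialConformal_mem hw (hpos s hs))
    (fun s hs => ⟨0, 0, 1, hflow s hs⟩)
  rwa [specialConformal_zero, eq_comm] at this

/-- A representative of each cross-ratio: `crossRatio (canonicalConfig η) = η`. -/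
noncomputable def canonicalConfig (η : ℝ) : Fin 4 → ℝ := ![1, (1 - η) / (1 + η), 0, -1]

lemma crossRatio_mem_Ioo {w : Fin 4 → ℝ} (hw : w ∈ orderedConfigs) :
    crossRatio w ∈ Ioo 0 1 := by
  have h10 : w 1 < w 0 := hw (by decide)
  have h21 : w 2 < w 1 := hw (by decide)
  have h32 : w 3 < w 2 := hw (by decide)
  have hden : 0 < (w 0 - w 2) * (w 1 - w 3) := mul_pos (by linarith) (by linarith)
  refine ⟨div_pos (mul_pos (by linarith) (by linarith)) hden, ?_⟩
  rw [crossRatio, div_lt_one hden]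
  nlinarith [mul_pos (sub_pos.2 h10) (sub_pos.2 h21), mul_pos (sub_pos.2 h21) (sub_pos.2 h32),
    mul_pos (sub_pos.2 h21) (sub_pos.2 h21)]

lemma crossRatio_add_const (w : Fin 4 → ℝ) (t : ℝ) :
    crossRatio (fun i => w i + t) = crossRatio w := by
  simp only [crossRatio, add_sub_add_right_eq_sub]

/-- With `u = (A + C) / 2AC` and `k = (C - A) / 2AC`, the map `x ↦ k x / (1 - u x)` fixes `0`
and sends `A ↦ 1`, `C ↦ -1`. -/
lemma normalizing_moebius {A C X : ℝ} (hA : 0 < A) (hC : C < 0) (hX : X ∈ Icc C A) :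
    0 < 1 - (A + C) / (2 * A * C) * X ∧
      (C - A) / (2 * A * C) * (X / (1 - (A + C) / (2 * A * C) * X))
        = (A - C) * X / ((A + C) * X - 2 * A * C) := by
  have hA0 := hA.ne'
  have hC0 := hC.ne
  -- affine in `X`, and positive at both ends `X = C` and `X = A`
  have hnum : 0 < (A + C) * X - 2 * A * C := by
    rcases le_total 0 X with h | h <;> nlinarith [hX.1, hX.2]
  have hden :
      1 - (A + C) / (2 * A * C) * X = ((A + C) * X - 2 * A * C) / (-(2 * A * C)) := by
    field_simp
    ring
  rw [hden]
  refine ⟨div_pos hnum (by nlinarith), ?_⟩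
  have := hnum.ne'
  field_simp
  ring

lemma exists_specialConformal_eq_canonicalConfig {z : Fin 4 → ℝ} (hz : z ∈ orderedConfigs)
    (hz2 : z 2 = 0) :
    ∃ u k : ℝ, 0 < k ∧ (∀ i, 0 < 1 - u * z i) ∧
      (fun i => k * specialConformal u z i) = canonicalConfig (crossRatio z) := by
  have hA : 0 < z 0 := by linarith [hz (show (0 : Fin 4) < 2 by decide)]
  have hB : 0 < z 1 := by linarith [hz (show (1 : Fin 4) < 2 by decide)]
  have hBA : z 1 < z 0 := hz (by decide)
  have hC : z 3 < 0 := by linarith [hz (show (2 : Fin 4) < 3 by decide)]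
  have hmem : ∀ i, z i ∈ Icc (z 3) (z 0) := fun i =>
    ⟨hz.antitone (show i ≤ 3 from Fin.le_last i), hz.antitone (Fin.zero_le i)⟩
  refine ⟨(z 0 + z 3) / (2 * z 0 * z 3), (z 3 - z 0) / (2 * z 0 * z 3),
    div_pos_of_neg_of_neg (by linarith) (by nlinarith),
    fun i => (normalizing_moebius hA hC (hmem i)).1, funext fun i => ?_⟩
  simp only [specialConformal]
  rw [(normalizing_moebius hA hC (hmem i)).2]
  fin_cases i <;> simp only [canonicalConfig, crossRatio, hz2, Fin.zero_eta, Fin.mk_one,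
    Fin.reduceFinMk, Fin.isValue, Matrix.cons_val]
  · rw [div_eq_one_iff_eq (by nlinarith)]
    ring
  · have hBC : (z 0 - 0) * (z 1 - z 3) ≠ 0 := by nlinarith
    rw [one_sub_div hBC, one_add_div hBC, div_div_div_cancel_right₀ hBC,
      div_eq_div_iff (by nlinarith) (by nlinarith)]
    ring
  · simp
  · rw [div_eq_iff (by nlinarith)]
    ring

lemma IsWardSolution.reducedAmp_eq_canonicalConfig {p : Fin 4 → ℂ} {f : (Fin 4 → ℝ) → ℂ}
    (hf : IsWardSolution p f) {w : Fin 4 → ℝ} (hw : w ∈ orderedConfigs) :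
    reducedAmp p f w = reducedAmp p f (canonicalConfig (crossRatio w)) := by
  have hz : (fun i => w i + -w 2) ∈ orderedConfigs := hw.add_const _
  obtain ⟨u, k, hk, hu, hcanon⟩ :=
    exists_specialConformal_eq_canonicalConfig hz (add_neg_cancel _)
  rw [← crossRatio_add_const w (-w 2), ← hcanon,
    hf.reducedAmp_const_mul (specialConformal_mem hz hu) hk,
    hf.reducedAmp_specialConformal hz hu, hf.reducedAmp_add_const hw]

/-- Solving the Ward identities for a 4-point function of bosonic ghost
primaries with charges `jᵢ` and weights `hᵢ`: any `C¹` solution on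
`{w₁ > w₂ > w₃ > w₄}` is `H(η) ∏_{a<b} (w_a - w_b)^(p̄ - p_a - p_b)` for a
function `H` of the cross-ratio `η`, which lies in `(0,1)` on the domain. -/
theorem ghost_four_point_ward (h j : Fin 4 → ℂ) (f : (Fin 4 → ℝ) → ℂ)
    (hf : ContDiffOn ℝ 1 f {w : Fin 4 → ℝ | w 3 < w 2 ∧ w 2 < w 1 ∧ w 1 < w 0})
    (hW1 : ∀ w ∈ {w : Fin 4 → ℝ | w 3 < w 2 ∧ w 2 < w 1 ∧ w 1 < w 0},
      ∑ i, pderiv4 f i w = 0)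
    (hW2 : ∀ w ∈ {w : Fin 4 → ℝ | w 3 < w 2 ∧ w 2 < w 1 ∧ w 1 < w 0},
      ∑ i, ((w i : ℂ) * pderiv4 f i w + shiftedWt h j i * f w) = 0)
    (hW3 : ∀ w ∈ {w : Fin 4 → ℝ | w 3 < w 2 ∧ w 2 < w 1 ∧ w 1 < w 0},
      ∑ i, ((w i : ℂ) ^ 2 * pderiv4 f i w + 2 * shiftedWt h j i * (w i : ℂ) * f w) = 0) :
    ∃ H : ℝ → ℂ, ∀ w ∈ {w : Fin 4 → ℝ | w 3 < w 2 ∧ w 2 < w 1 ∧ w 1 < w 0},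
      crossRatio w ∈ Set.Ioo (0 : ℝ) 1 ∧
      f w = H (crossRatio w) * wardPrefactor h j w := by
  rw [orderedConfigs_eq] at hf hW1 hW2 hW3 ⊢
  have hward : IsWardSolution (shiftedWt h j) f :=
    ⟨hf.differentiableOn one_ne_zero, hW1, hW2, hW3⟩
  refine ⟨fun η => reducedAmp (shiftedWt h j) f (canonicalConfig η),
    fun w hw => ⟨crossRatio_mem_Ioo hw, ?_⟩⟩
  dsimp only
  rw [← hward.reducedAmp_eq_canonicalConfig hw, wardPrefactor_eq_exp_logPrefactor h j hw,
    reducedAmp, mul_assoc, ← Complex.exp_add, neg_add_cancel, Complex.exp_zero, mul_one]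
end

section
/- Let ℓ ∈ ℕ with ℓ ≥ 3, let j₁, j₂, j₃, C, C₁, C₂ ∈ ℂ with j₁ + j₂ + j₃ = ℓ, and set a := j₁ + j₂(ℓ−1) + (j₃ − (ℓ+1)/2)ℓ and b := j₁(ℓ−1) + j₂ + (j₃ − (ℓ+1)/2)ℓ. Suppose that C·(x − y)^{ℓ−1}·(a·x + b·y) = −j₂C₂·x^ℓ − j₁C₁·y^ℓ holds for all x, y ∈ ℂ. Then j₁C₁ = 0 and j₂C₂ = 0; moreover, if j₁ ≠ j₂ then C = 0. -/
/-!
Dehomogenising at `y = 1`, the identity becomes an equality of polynomials in `x`. For `ℓ ≥ 3`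
the monomials `x^(ℓ-1) y` and `x y^(ℓ-1)` are distinct from `x^ℓ` and `y^ℓ`, so their coefficients
`C (b - (ℓ-1) a)` and `± C (a - (ℓ-1) b)` on the left must vanish. As `(ℓ-1)^2 ≠ 1`, this forces
`C a = C b = 0`, hence both sides are zero; and `b - a = (j₁ - j₂)(ℓ - 2)`, so `C = 0` once `j₁ ≠ j₂`.
-/

open Polynomial

theorem coeff_X_sub_one_pow_succ_mul_linear {R : Type*} [CommRing R] (n : ℕ) (a b : R) :
    ((X - 1 : R[X]) ^ (n + 1) * (C a * X + C b)).coeff (n + 1) = b - (n + 1) * a := by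
  rw [show (X - 1 : R[X]) = X + C (-1) by simp [sub_eq_add_neg], mul_add, mul_comm (C a),
    ← mul_assoc, mul_comm (_ ^ _) (C b), coeff_add, coeff_mul_C, coeff_mul_X, coeff_C_mul,
    coeff_X_add_C_pow, coeff_X_add_C_pow]
  simp
  ring

section

variable {K : Type*} [Field K] {c a b p q : K}

theorem mul_sub_mul_eq_zero_of_sub_one_pow_mul_eq [Infinite K] {n : ℕ} (hn : n ≠ 0)
    (h : ∀ x : K, c * (x - 1) ^ n * (a * x + b) = p * x ^ (n + 1) + q) :
    c * (b - n * a) = 0 := by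
  have hpoly : C c * ((X - 1 : K[X]) ^ n * (C a * X + C b)) = C p * X ^ (n + 1) + C q :=
    Polynomial.funext fun x => by simpa [mul_assoc] using h x
  obtain ⟨m, rfl⟩ : ∃ m, n = m + 1 := Nat.exists_eq_succ_of_ne_zero hn
  simpa [coeff_X_sub_one_pow_succ_mul_linear, coeff_C, coeff_X_pow] using
    congrArg (coeff · (m + 1)) hpoly

theorem cross_coeffs_eq_zero_of_sub_pow_mul_eq [Infinite K] {n : ℕ} (hn : n ≠ 0)
    (h : ∀ x y : K, c * (x - y) ^ n * (a * x + b * y) = p * x ^ (n + 1) + q * y ^ (n + 1)) :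
    c * (b - n * a) = 0 ∧ c * (a - n * b) = 0 := by
  refine ⟨mul_sub_mul_eq_zero_of_sub_one_pow_mul_eq hn fun x => by simpa using h x 1, ?_⟩
  -- the same coefficient of the identity with `x` and `y` exchanged
  have hswapped := mul_sub_mul_eq_zero_of_sub_one_pow_mul_eq hn (c := (-1) ^ n * c) (a := b)
    (b := a) (p := q) (q := p) fun x => by
      have hx := h 1 x
      rw [← neg_sub, neg_pow] at hx
      linear_combination hx
  rw [mul_assoc] at hswapped
  exact (mul_eq_zero.mp hswapped).resolve_left (pow_ne_zero _ (by norm_num))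

theorem eq_zero_of_sub_pow_mul_eq [CharZero K] {ℓ : ℕ} (hℓ : 3 ≤ ℓ)
    (h : ∀ x y : K, c * (x - y) ^ (ℓ - 1) * (a * x + b * y) = p * x ^ ℓ + q * y ^ ℓ) :
    c * a = 0 ∧ c * b = 0 ∧ p = 0 ∧ q = 0 := by
  obtain ⟨n, rfl⟩ : ∃ n, ℓ = n + 1 := ⟨ℓ - 1, by omega⟩
  simp only [Nat.add_sub_cancel] at h
  obtain ⟨htop, hbot⟩ := cross_coeffs_eq_zero_of_sub_pow_mul_eq (by omega) h
  have hdet : (1 - (n : K) ^ 2) ≠ 0 :=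
    sub_ne_zero.mpr (by exact_mod_cast (by nlinarith : 1 ≠ n ^ 2))
  have ha : c * a = 0 := by
    simpa [hdet] using (by linear_combination n * htop + hbot : (1 - (n : K) ^ 2) * (c * a) = 0)
  have hb : c * b = 0 := by
    simpa [hdet] using (by linear_combination htop + n * hbot : (1 - (n : K) ^ 2) * (c * b) = 0)
  refine ⟨ha, hb, ?_, ?_⟩
  · linear_combination ha - h 1 0
  · linear_combination (-1) ^ n * hb - h 0 1

end

theorem ghost_three_point_vanishing_general (ℓ : ℕ) (hℓ : 3 ≤ ℓ) (j₁ j₂ j₃ C C₁ C₂ : ℂ)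
    (hid : ∀ x y : ℂ,
      C * (x - y) ^ (ℓ - 1)
          * ((j₁ + j₂ * (ℓ - 1) + (j₃ - (ℓ + 1) / 2) * ℓ) * x
            + (j₁ * (ℓ - 1) + j₂ + (j₃ - (ℓ + 1) / 2) * ℓ) * y)
        = -(j₂ * C₂) * x ^ ℓ - (j₁ * C₁) * y ^ ℓ) :
    j₁ * C₁ = 0 ∧ j₂ * C₂ = 0 ∧ (j₁ ≠ j₂ → C = 0) := by
  obtain ⟨ha, hb, hu, hv⟩ := eq_zero_of_sub_pow_mul_eq hℓ (p := -(j₂ * C₂)) (q := -(j₁ * C₁))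
    fun x y => (hid x y).trans (by ring)
  refine ⟨neg_eq_zero.mp hv, neg_eq_zero.mp hu, fun hne => ?_⟩
  have hℓ2 : (ℓ : ℂ) - 2 ≠ 0 := sub_ne_zero.mpr (by exact_mod_cast (by omega : ℓ ≠ 2))
  have hC : C * ((j₁ - j₂) * ((ℓ : ℂ) - 2)) = 0 := by linear_combination hb - ha
  simpa [sub_ne_zero.mpr hne, hℓ2] using hC

/-- The KZ constraint on 3-point constants with `ℓ ≥ 3` units of spectral
flow: the cross-terms produced by `(x - y)^(ℓ-1)` cannot be accommodated, so
the 3-point constants must vanish: `j₁C₁ = 0`, `j₂C₂ = 0`, and `C = 0`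
whenever `j₁ ≠ j₂`. -/
theorem ghost_three_point_vanishing (ℓ : ℕ) (hℓ : 3 ≤ ℓ) (j₁ j₂ j₃ C C₁ C₂ : ℂ)
    (hsum : j₁ + j₂ + j₃ = ℓ)
    (hid : ∀ x y : ℂ,
      C * (x - y) ^ (ℓ - 1)
          * ((j₁ + j₂ * (ℓ - 1) + (j₃ - (ℓ + 1) / 2) * ℓ) * x
            + (j₁ * (ℓ - 1) + j₂ + (j₃ - (ℓ + 1) / 2) * ℓ) * y)
        = -(j₂ * C₂) * x ^ ℓ - (j₁ * C₁) * y ^ ℓ) :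
    j₁ * C₁ = 0 ∧ j₂ * C₂ = 0 ∧ (j₁ ≠ j₂ → C = 0) :=
  ghost_three_point_vanishing_general ℓ hℓ j₁ j₂ j₃ C C₁ C₂ hid
end

section
/- Let j₃ ∈ ℂ and suppose that for every k ∈ ℤ we are given a differentiable function G_k : (0,1) → ℂ such that, for all k ∈ ℤ and all η ∈ (0,1): (i) G_k′(η) = ((j₃ + k)/η²)·G_{k+1}(η) and (ii) G_k(η) = (1/η)·G_{k+1}(η). Then there exists a single constant C ∈ ℂ such that G_k(η) = C·η^{j₃+k} for every k ∈ ℤ and η ∈ (0,1). -/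
/-!
The algebraic equation says `G (k + 1) = η * G k`, so every `G k` is determined by `G 0`.
At `k = 0` the differential equation then becomes the Euler equation `G₀' = (j₃ / η) G₀`,
whose solutions on `(0, 1)` are `C η ^ j₃` because `G₀ η ^ (-j₃)` has zero derivative;
the recurrence carries this to `C η ^ (j₃ + k)` for all `k ∈ ℤ`.
-/

open Set

lemma hasDerivAt_ofReal_cpow_of_pos {x : ℝ} (hx : 0 < x) (c : ℂ) :
    HasDerivAt (fun y : ℝ => (y : ℂ) ^ c) (c * (x : ℂ) ^ (c - 1)) x :=
  (Complex.hasStrictDerivAt_cpow_const (Complex.ofReal_mem_slitPlane.2 hx)).hasDerivAt.comp_ofReal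

lemma exists_eq_mul_cpow_of_hasDerivAt {f : ℝ → ℂ} {c : ℂ} {s : Set ℝ} (hs : IsOpen s)
    (hs' : IsPreconnected s) (hpos : s ⊆ Ioi 0)
    (hf : ∀ x ∈ s, HasDerivAt f (c / x * f x) x) :
    ∃ C : ℂ, ∀ x ∈ s, f x = C * (x : ℂ) ^ c := by
  have hH : ∀ x ∈ s, HasDerivAt (fun y : ℝ => f y * (y : ℂ) ^ (-c)) 0 x := by
    intro x hx
    have hx0 : (x : ℂ) ≠ 0 := Complex.ofReal_ne_zero.2 (hpos hx).ne'
    refine ((hf x hx).mul (hasDerivAt_ofReal_cpow_of_pos (hpos hx) (-c))).congr_deriv ?_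
    rw [Complex.cpow_sub _ _ hx0, Complex.cpow_one]
    field_simp
    ring
  obtain ⟨C, hC⟩ := hs.exists_is_const_of_deriv_eq_zero hs'
    (fun x hx => (hH x hx).differentiableAt.differentiableWithinAt)
    (fun x hx => (hH x hx).deriv)
  refine ⟨C, fun x hx => ?_⟩
  have hx0 : (x : ℂ) ≠ 0 := Complex.ofReal_ne_zero.2 (hpos hx).ne'
  rw [← hC x hx, mul_assoc, ← Complex.cpow_add _ _ hx0, neg_add_cancel, Complex.cpow_zero,
    mul_one]

lemma eq_mul_cpow_add_intCast {G : ℤ → ℂ} {z c C : ℂ} (hz : z ≠ 0)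
    (hsucc : ∀ k, G (k + 1) = z * G k) (h0 : G 0 = C * z ^ c) (k : ℤ) :
    G k = C * z ^ (c + k) := by
  induction k using Int.induction_on with
  | zero => simpa using h0
  | succ k ih =>
    rw [hsucc, ih, show c + ((k + 1 : ℤ) : ℂ) = c + (k : ℤ) + 1 by push_cast; ring,
      Complex.cpow_add (c + _) 1 hz, Complex.cpow_one]
    ring
  | pred k ih =>
    have h := hsucc (-k - 1)
    rw [sub_add_cancel, ih] at h
    rw [show c + ((-k - 1 : ℤ) : ℂ) = c + (-k : ℤ) - 1 by push_cast; ring,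
      Complex.cpow_sub _ _ hz, Complex.cpow_one, ← mul_div_assoc, h]
    field_simp

/-- Solving the coupled differential and algebraic KZ equations for the
specialised 4-point functions `G_k` of bosonic ghost primaries with one unit
of spectral flow: there is a single constant `C` with
`G_k(η) = C η^(j₃ + k)` for all `k` and all `η ∈ (0,1)`. -/
theorem ghost_kz_l1_solution (j₃ : ℂ) (G : ℤ → ℝ → ℂ)
    (hKZ : ∀ k : ℤ, ∀ η ∈ Set.Ioo (0 : ℝ) 1,
      HasDerivAt (G k) (((j₃ + (k : ℂ)) / (η : ℂ) ^ 2) * G (k + 1) η) η)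
    (hAlg : ∀ k : ℤ, ∀ η ∈ Set.Ioo (0 : ℝ) 1,
      G k η = (1 / (η : ℂ)) * G (k + 1) η) :
    ∃ C : ℂ, ∀ k : ℤ, ∀ η ∈ Set.Ioo (0 : ℝ) 1,
      G k η = C * (η : ℂ) ^ (j₃ + (k : ℂ)) := by
  have hsucc : ∀ k, ∀ η ∈ Ioo (0 : ℝ) 1, G (k + 1) η = η * G k η := by
    intro k η hη
    have hη0 : (η : ℂ) ≠ 0 := Complex.ofReal_ne_zero.2 hη.1.ne'
    rw [hAlg k η hη]
    field_simp
  have hEuler : ∀ η ∈ Ioo (0 : ℝ) 1, HasDerivAt (G 0) (j₃ / η * G 0 η) η := by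
    intro η hη
    refine (hKZ 0 η hη).congr_deriv ?_
    rw [Int.cast_zero, add_zero, hsucc 0 η hη]
    field_simp
  obtain ⟨C, hC⟩ := exists_eq_mul_cpow_of_hasDerivAt isOpen_Ioo isPreconnected_Ioo
    Ioo_subset_Ioi_self hEuler
  exact ⟨C, fun k η hη => eq_mul_cpow_add_intCast (G := (G · η))
    (Complex.ofReal_ne_zero.2 hη.1.ne') (fun k => hsucc k η hη) (hC η hη) k⟩
end
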